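/- arXiv:1610.03261 — 3 statements merged into one kernel-verified Lean document; each statement's English description precedes it below -/
import Mathlib

section
/- Let O ⊆ ℝ^d be a bounded Borel set, let X₁, …, X_N : Ω → O be random variables and Y₁, …, Y_N : Ω → O be independent identically distributed random variables with common law ρ, where ρ is absolutely continuous with density in L¹ ∩ L∞. Suppose the set-valued map K satisfies (H1)–(H2) with constant C₀ and generalized boundary Θ, w is Lipschitz, and ∇φ is bounded and Lipschitz. Let μ^N := (1/N) Σ_{i=1}^N δ_{X_i}, ρ^N := (1/N) Σ_{i=1}^N δ_{Y_i}, and define the random variable H_N := ‖∇φ‖_{L∞} sup_{i=1,…,N} sup_{u ≥ 0} | ∫ 1_{Θ(w(Y_i))^{u,+}}(y − Y_i)(ρ^N − ρ)(dy) | + sup_{i=1,…,N} | V[ρ^N](Y_i) − V[ρ](Y_i) |. Then there exists a constant C > 0, depending only on C₀, ‖∇φ‖_{W^{1,∞}} and ‖w‖_Lip but independent of N, such that almost surely sup_{i=1,…,N} | V[μ^N](X_i) − V[ρ](Y_i) | ≤ C ( ‖ρ‖_{L¹∩L∞} sup_{i=1,…,N} |X_i − Y_i| + H_N ). -/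
open MeasureTheory Metric Set Pointwise ProbabilityTheory

noncomputable section

/-- Euclidean space `ℝ^d`. -/
abbrev Euc (d : ℕ) := EuclideanSpace ℝ (Fin d)

/-- The `ε`-boundary of a set `A ⊆ ℝ^d`: `∂^ε A = {x + y : x ∈ ∂A, ‖y‖ ≤ ε}`. -/
def epsBdry {d : ℕ} (A : Set (Euc d)) (ε : ℝ) : Set (Euc d) :=
  frontier A + Metric.closedBall 0 ε

/-- The `ε`-enlargement `A^{ε,+} = A ∪ ∂^ε A`. -/
def enl {d : ℕ} (A : Set (Euc d)) (ε : ℝ) : Set (Euc d) := A ∪ epsBdry A ε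

/-- Assumptions (H1)-(H2) on the set-valued map `K` with constant `C₀`, enveloping
compact set `𝒦`, and generalized boundary `Θ`. -/
structure HypK {d : ℕ} (K Θ : Euc d → Set (Euc d)) (C₀ : ℝ) (𝒦 : Set (Euc d)) : Prop where
  compact_env : IsCompact 𝒦
  compact : ∀ x, IsCompact (K x)
  nonempty : ∀ x, (K x).Nonempty
  subset_env : ∀ x, K x ⊆ 𝒦
  closed_Θ : ∀ x, IsClosed (Θ x)
  h2i : ∀ x, frontier (K x) ⊆ Θ x
  h2ii : ∀ x, ∀ ε : ℝ, 0 < ε → ε < 1 → volume (enl (Θ x) ε) ≤ ENNReal.ofReal (C₀ * ε)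
  h2iii : ∀ x x', symmDiff (K x) (K x') ⊆ enl (Θ x) (C₀ * ‖x - x'‖)
  h2iv : ∀ x x', Θ x ⊆ enl (Θ x') (C₀ * ‖x - x'‖)

/-- The velocity field `V[μ](x) = ∫ ∇φ(x − y) 1_{K(w(x))}(y − x) μ(dy)`. -/
def vel {d : ℕ} (gradφ : Euc d → Euc d) (K : Euc d → Set (Euc d)) (w : Euc d → Euc d)
    (μ : Measure (Euc d)) (x : Euc d) : Euc d :=
  ∫ y, ((K (w x)).indicator (fun _ => (1 : ℝ)) (y - x)) • gradφ (x - y) ∂μ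

/-- The random variable
`H_N = ‖∇φ‖_{L∞} sup_i sup_{u≥0} |∫ 1_{Θ(w(Y_i))^{u,+}}(y − Y_i)(ρ^N − ρ)(dy)|
      + sup_i |V[ρ^N](Y_i) − V[ρ](Y_i)|`, written out for the sample `Y`. -/
def hNrv {d : ℕ} (N : ℕ) (gradφ : Euc d → Euc d) (K Θ : Euc d → Set (Euc d))
    (w : Euc d → Euc d) (ρ : Measure (Euc d)) (Y : Fin N → Euc d) : ℝ :=
  (⨆ x, ‖gradφ x‖) *
    (⨆ i : Fin N, ⨆ u : {u : ℝ // 0 ≤ u},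
      |(N : ℝ)⁻¹ * ∑ j : Fin N,
          (enl (Θ (w (Y i))) u.1).indicator (fun _ => (1 : ℝ)) (Y j - Y i)
        - ∫ y, (enl (Θ (w (Y i))) u.1).indicator (fun _ => (1 : ℝ)) (y - Y i) ∂ρ|)
  + ⨆ i : Fin N,
      ‖((N : ℝ)⁻¹ • ∑ j : Fin N,
          ((K (w (Y i))).indicator (fun _ => (1 : ℝ)) (Y j - Y i)) • gradφ (Y i - Y j))
        - vel gradφ K w ρ (Y i)‖

section MyAux
open MeasureTheory Metric Set Pointwise
open scoped ENNReal NNReal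

variable {d : ℕ}

lemma enl_mono {A : Set (Euc d)} {u u' : ℝ} (h : u ≤ u') : enl A u ⊆ enl A u' :=
  Set.union_subset_union_right _
    (Set.add_subset_add_left (Metric.closedBall_subset_closedBall h))

lemma seg_cross {A : Set (Euc d)} (hA : IsClosed A) {p q : Euc d}
    (hp : p ∈ A) (hq : q ∉ A) :
    ∃ z ∈ frontier A, ‖q - z‖ ≤ ‖q - p‖ ∧ ‖p - z‖ ≤ ‖q - p‖ := by
  set g : ℝ → Euc d := fun t => p + t • (q - p) with hg
  have hgc : Continuous g := by fun_prop
  set S : Set ℝ := Set.Icc (0:ℝ) 1 ∩ g ⁻¹' A with hS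
  have hScl : IsClosed S := isClosed_Icc.inter (hA.preimage hgc)
  have hSne : S.Nonempty := ⟨0, ⟨le_refl _, zero_le_one⟩, by simp [hg, hp]⟩
  have hSbdd : BddAbove S := ⟨1, fun t ht => ht.1.2⟩
  set t₀ : ℝ := sSup S with ht₀
  have ht₀S : t₀ ∈ S := hScl.csSup_mem hSne hSbdd
  have ht₀A : g t₀ ∈ A := ht₀S.2
  have ht₀1 : t₀ < 1 := by
    rcases lt_or_eq_of_le ht₀S.1.2 with h | h
    · exact h
    · exfalso; apply hq; have : g 1 = q := by simp [hg]
      rw [← this, ← h]; exact ht₀A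
  have hfr : g t₀ ∈ frontier A := by
    rw [frontier_eq_closure_inter_closure]
    refine ⟨subset_closure ht₀A, ?_⟩
    have hne : (nhdsWithin t₀ (Set.Ioi t₀)).NeBot := nhdsGT_neBot t₀
    clear_value t₀
    have htd : Filter.Tendsto g (nhdsWithin t₀ (Set.Ioi t₀)) (nhds (g t₀)) :=
      (hgc.tendsto t₀).mono_left nhdsWithin_le_nhds
    refine mem_closure_of_tendsto htd ?_
    filter_upwards [Ioo_mem_nhdsGT ht₀1] with t ht
    intro htA
    have hle : t ≤ t₀ := by
      rw [ht₀]; exact le_csSup hSbdd ⟨⟨ht₀S.1.1.trans ht.1.le, ht.2.le⟩, htA⟩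
    exact absurd hle (not_le.2 ht.1)
  refine ⟨g t₀, hfr, ?_, ?_⟩
  · have h1 : q - g t₀ = (1 - t₀) • (q - p) := by rw [hg]; simp only; module
    rw [h1, norm_smul, Real.norm_eq_abs, abs_of_nonneg (by linarith : (0:ℝ) ≤ 1 - t₀)]
    nlinarith [norm_nonneg (q - p), ht₀S.1.1]
  · have h1 : p - g t₀ = (-t₀) • (q - p) := by rw [hg]; simp only; module
    rw [h1, norm_smul, Real.norm_eq_abs, abs_neg, abs_of_nonneg ht₀S.1.1]
    nlinarith [norm_nonneg (q - p), ht₀S.1.1]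

lemma mem_enl_of_closed {A : Set (Euc d)} (hA : IsClosed A) {p q : Euc d} {u : ℝ}
    (hp : p ∈ A) (h : ‖q - p‖ ≤ u) : q ∈ enl A u := by
  by_cases hq : q ∈ A
  · exact Or.inl hq
  · obtain ⟨z, hz, hqz, -⟩ := seg_cross hA hp hq
    right
    have hb : q - z ∈ Metric.closedBall (0 : Euc d) u := by
      rw [mem_closedBall_zero_iff]; exact hqz.trans h
    have := Set.add_mem_add hz hb
    rwa [add_sub_cancel] at this

lemma mem_enl_trans {A : Set (Euc d)} (hA : IsClosed A) {p q : Euc d} {r s : ℝ}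
    (hr : 0 ≤ r) (hp : p ∈ enl A r) (h : ‖q - p‖ ≤ s) : q ∈ enl A (r + s) := by
  rcases hp with hp | hp
  · exact enl_mono (by linarith) (mem_enl_of_closed hA hp h)
  · obtain ⟨z, hz, v, hv, hzv⟩ := hp
    right
    have hb : v + (q - p) ∈ Metric.closedBall (0 : Euc d) (r + s) := by
      rw [mem_closedBall_zero_iff]
      calc ‖v + (q - p)‖ ≤ ‖v‖ + ‖q - p‖ := norm_add_le _ _
        _ ≤ r + s := add_le_add (mem_closedBall_zero_iff.1 hv) h
    have := Set.add_mem_add hz hb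
    have hzv' : z + v = p := hzv
    rwa [show z + (v + (q - p)) = (z + v) + (q - p) from by abel, hzv', add_sub_cancel] at this

lemma enl_isClosed {A : Set (Euc d)} (hA : IsClosed A) (u : ℝ) : IsClosed (enl A u) :=
  hA.union (isClosed_frontier.add_right_of_isCompact (isCompact_closedBall 0 u))

lemma indicator_diff_bound {K Θ : Euc d → Set (Euc d)} {C₀ : ℝ} {𝒦 : Set (Euc d)}
    (hyp : HypK K Θ C₀ 𝒦) (hC₀ : 0 ≤ C₀)
    {w : Euc d → Euc d} {Lw : NNReal} (hw : LipschitzWith Lw w)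
    {ε : ℝ} {xi xj yi yj : Euc d}
    (hi : ‖xi - yi‖ ≤ ε) (hj : ‖xj - yj‖ ≤ ε) :
    |(K (w xi)).indicator (fun _ => (1:ℝ)) (xj - xi) -
      (K (w yi)).indicator (fun _ => (1:ℝ)) (yj - yi)| ≤
    (enl (Θ (w yi)) ((C₀ * Lw + 2) * ε)).indicator (fun _ => (1:ℝ)) (yj - yi) := by
  have hε0 : 0 ≤ ε := le_trans (norm_nonneg _) hi
  have hLw0 : (0:ℝ) ≤ Lw := Lw.coe_nonneg
  set p : Euc d := xj - xi with hpdef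
  set q : Euc d := yj - yi with hqdef
  have hqp : ‖q - p‖ ≤ 2 * ε := by
    have h1 : q - p = (yj - xj) - (yi - xi) := by rw [hpdef, hqdef]; abel
    rw [h1]
    calc ‖(yj - xj) - (yi - xi)‖ ≤ ‖yj - xj‖ + ‖yi - xi‖ := norm_sub_le _ _
      _ = ‖xj - yj‖ + ‖xi - yi‖ := by rw [norm_sub_rev yj xj, norm_sub_rev yi xi]
      _ ≤ 2 * ε := by linarith
  have hrle : C₀ * ‖w yi - w xi‖ ≤ C₀ * (Lw * ε) := by
    apply mul_le_mul_of_nonneg_left _ hC₀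
    have hd := hw.dist_le_mul yi xi
    rw [dist_eq_norm, dist_eq_norm] at hd
    calc ‖w yi - w xi‖ ≤ Lw * ‖yi - xi‖ := hd
      _ ≤ Lw * ε := by
          apply mul_le_mul_of_nonneg_left _ hLw0
          rw [norm_sub_rev]; exact hi
  have hBcl : IsClosed (K (w yi)) := (hyp.compact (w yi)).isClosed
  have hΘcl : IsClosed (Θ (w yi)) := hyp.closed_Θ (w yi)
  by_cases hpA : p ∈ K (w xi) <;> by_cases hqB : q ∈ K (w yi)
  · rw [Set.indicator_of_mem hpA, Set.indicator_of_mem hqB, sub_self, abs_zero]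
    exact Set.indicator_nonneg (fun _ _ => zero_le_one) _
  · have hqe : q ∈ enl (Θ (w yi)) ((C₀ * Lw + 2) * ε) := by
      by_cases hpB : p ∈ K (w yi)
      · obtain ⟨z, hz, hqz, -⟩ := seg_cross hBcl hpB hqB
        have hm : q ∈ enl (Θ (w yi)) (2 * ε) :=
          mem_enl_of_closed hΘcl (hyp.h2i _ hz) (hqz.trans hqp)
        exact enl_mono (by nlinarith [mul_nonneg (mul_nonneg hC₀ hLw0) hε0]) hm
      · have hps : p ∈ symmDiff (K (w yi)) (K (w xi)) :=
          Set.mem_symmDiff.2 (Or.inr ⟨hpA, hpB⟩)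
        have hpe2 : p ∈ enl (Θ (w yi)) (C₀ * (Lw * ε)) := enl_mono hrle (hyp.h2iii _ _ hps)
        have h3 := mem_enl_trans hΘcl (by positivity) hpe2 hqp
        exact enl_mono (by nlinarith) h3
    rw [Set.indicator_of_mem hpA, Set.indicator_of_notMem hqB, Set.indicator_of_mem hqe]
    norm_num
  · have hqe : q ∈ enl (Θ (w yi)) ((C₀ * Lw + 2) * ε) := by
      by_cases hpB : p ∈ K (w yi)
      · have hps : p ∈ symmDiff (K (w yi)) (K (w xi)) :=
          Set.mem_symmDiff.2 (Or.inl ⟨hpB, hpA⟩)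
        have hpe2 : p ∈ enl (Θ (w yi)) (C₀ * (Lw * ε)) := enl_mono hrle (hyp.h2iii _ _ hps)
        have h3 := mem_enl_trans hΘcl (by positivity) hpe2 hqp
        exact enl_mono (by nlinarith) h3
      · obtain ⟨z, hz, -, hqz⟩ := seg_cross hBcl hqB hpB
        have hm : q ∈ enl (Θ (w yi)) (2 * ε) := by
          refine mem_enl_of_closed hΘcl (hyp.h2i _ hz) (hqz.trans ?_)
          rw [norm_sub_rev]; exact hqp
        exact enl_mono (by nlinarith [mul_nonneg (mul_nonneg hC₀ hLw0) hε0]) hm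
    rw [Set.indicator_of_notMem hpA, Set.indicator_of_mem hqB, Set.indicator_of_mem hqe]
    norm_num
  · rw [Set.indicator_of_notMem hpA, Set.indicator_of_notMem hqB, sub_self, abs_zero]
    exact Set.indicator_nonneg (fun _ _ => zero_le_one) _

lemma integral_indicator_shift (ρ : MeasureTheory.Measure (Euc d)) [IsFiniteMeasure ρ]
    {A : Set (Euc d)} (hA : MeasurableSet A) (c : Euc d) :
    (∫ z, A.indicator (fun _ => (1:ℝ)) (z - c) ∂ρ) = (ρ ((fun z => z - c) ⁻¹' A)).toReal := by
  have hT : MeasurableSet ((fun z => z - c) ⁻¹' A) :=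
    hA.preimage (measurable_id.sub measurable_const)
  have heq : (fun z => A.indicator (fun _ => (1:ℝ)) (z - c))
      = ((fun z => z - c) ⁻¹' A).indicator (fun _ => (1:ℝ)) := rfl
  rw [heq]
  exact integral_indicator_one hT

lemma meas_shift_le {f : Euc d → ℝ} (hf0 : ∀ x, 0 ≤ f x)
    {A : Set (Euc d)} (hA : MeasurableSet A) (c : Euc d) :
    (volume.withDensity fun x => ENNReal.ofReal (f x)) ((fun z => z - c) ⁻¹' A)
      ≤ eLpNorm f ⊤ volume * volume A := by
  have hT : MeasurableSet ((fun z => z - c) ⁻¹' A) :=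
    hA.preimage (measurable_id.sub measurable_const)
  rw [withDensity_apply _ hT]
  have hae : ∀ᵐ z ∂(volume : MeasureTheory.Measure (Euc d)),
      ENNReal.ofReal (f z) ≤ eLpNorm f ⊤ volume := by
    rw [eLpNorm_exponent_top]
    filter_upwards [ENNReal.ae_le_essSup (fun x : Euc d => ((‖f x‖₊ : ℝ≥0∞)))] with z hz
    rw [← Real.enorm_eq_ofReal (hf0 z)]
    exact hz
  calc ∫⁻ z in ((fun z => z - c) ⁻¹' A), ENNReal.ofReal (f z) ∂volume
      ≤ ∫⁻ z in ((fun z => z - c) ⁻¹' A), eLpNorm f ⊤ volume ∂volume :=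
        lintegral_mono_ae (ae_restrict_of_ae hae)
    _ = eLpNorm f ⊤ volume * volume ((fun z => z - c) ⁻¹' A) := setLIntegral_const _ _
    _ = eLpNorm f ⊤ volume * volume A := by
        rw [show (fun z : Euc d => z - c) = (fun z => z + (-c)) from
          funext fun z => sub_eq_add_neg z c, measure_preimage_add_right]

end MyAux

open MeasureTheory Metric Set Pointwise ProbabilityTheory
open scoped ENNReal NNReal

set_option maxHeartbeats 2000000 in
private lemma main_det {d : ℕ} (K Θ : Euc d → Set (Euc d)) {C₀ : ℝ} (hC₀ : 0 < C₀)
    {𝒦 : Set (Euc d)} (hyp : HypK K Θ C₀ 𝒦)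
    (w : Euc d → Euc d) (Lw : NNReal) (hw : LipschitzWith Lw w)
    (gradφ : Euc d → Euc d) (Mφ : ℝ) (hMφ : ∀ x, ‖gradφ x‖ ≤ Mφ)
    (Lφ : NNReal) (hLφ : LipschitzWith Lφ gradφ)
    (ρ : Measure (Euc d)) [IsProbabilityMeasure ρ]
    (f : Euc d → ℝ) (hf0 : ∀ x, 0 ≤ f x)
    (hρd : ρ = volume.withDensity fun x => ENNReal.ofReal (f x))
    (hf1 : Integrable f) (hfinf : eLpNorm f ⊤ volume < ⊤)
    (N : ℕ) (hN : 0 < N) (x y : Fin N → Euc d) :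
    (⨆ i : Fin N,
      ‖((N : ℝ)⁻¹ • ∑ j : Fin N,
          ((K (w (x i))).indicator (fun _ => (1 : ℝ)) (x j - x i)) • gradφ (x i - x j))
        - vel gradφ K w ρ (y i)‖)
    ≤ (Mφ * ((C₀ + 1) * (C₀ * Lw + 2)) + 2 * Lφ + 1) *
        (((∫ z, f z) + (eLpNorm f ⊤ volume).toReal) * (⨆ i, ‖x i - y i‖)
          + hNrv N gradφ K Θ w ρ y) := by
  haveI : Nonempty (Fin N) := Fin.pos_iff_nonempty.mp hN
  have hNpos : (0:ℝ) < N := by exact_mod_cast hN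
  have hMφ0 : 0 ≤ Mφ := le_trans (norm_nonneg _) (hMφ 0)
  have hLw0 : (0:ℝ) ≤ Lw := Lw.coe_nonneg
  have hLφ0 : (0:ℝ) ≤ Lφ := Lφ.coe_nonneg
  set Q : ℝ := (C₀ + 1) * (C₀ * Lw + 2) with hQdef
  have hQ0 : 0 < Q := by rw [hQdef]; nlinarith [mul_nonneg hC₀.le hLw0]
  set Cc : ℝ := Mφ * Q + 2 * Lφ + 1 with hCcdef
  have hCc1 : 1 ≤ Cc := by rw [hCcdef]; nlinarith [mul_nonneg hMφ0 hQ0.le]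
  set M' : ℝ := ⨆ z, ‖gradφ z‖ with hM'def
  have hM'le : ∀ z, ‖gradφ z‖ ≤ M' := fun z =>
    le_ciSup ⟨Mφ, by rintro r ⟨z, rfl⟩; exact hMφ z⟩ z
  have hM'0 : 0 ≤ M' := le_trans (norm_nonneg _) (hM'le 0)
  have hM'Mφ : M' ≤ Mφ := Real.iSup_le hMφ hMφ0
  have hfint : ∫ z, f z = 1 := by
    have h1 : ENNReal.ofReal (∫ z, f z) = ∫⁻ z, ENNReal.ofReal (f z) ∂volume :=
      ofReal_integral_eq_lintegral_ofReal hf1 (Filter.Eventually.of_forall hf0)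
    have h2 : (∫⁻ z, ENNReal.ofReal (f z) ∂volume) = ρ Set.univ := by
      rw [hρd, withDensity_apply _ MeasurableSet.univ, Measure.restrict_univ]
    rw [h2, measure_univ] at h1
    have h3 := congrArg ENNReal.toReal h1
    rwa [ENNReal.toReal_ofReal (integral_nonneg hf0), ENNReal.toReal_one] at h3
  set R : ℝ := (∫ z, f z) + (eLpNorm f ⊤ volume).toReal with hRdef
  have hR1 : 1 ≤ R := by
    rw [hRdef, hfint]
    have : (0:ℝ) ≤ (eLpNorm f ⊤ volume).toReal := ENNReal.toReal_nonneg
    linarith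
  have hR0 : 0 ≤ R := le_trans zero_le_one hR1
  set ε : ℝ := ⨆ i, ‖x i - y i‖ with hεdef
  have hεb : ∀ i, ‖x i - y i‖ ≤ ε := by
    intro i; rw [hεdef]
    exact le_ciSup (Set.Finite.bddAbove (Set.finite_range fun i => ‖x i - y i‖)) i
  have hε0 : 0 ≤ ε := le_trans (norm_nonneg _) (hεb (Classical.arbitrary _))
  set F : Fin N → {u : ℝ // 0 ≤ u} → ℝ := fun i u =>
      |(N : ℝ)⁻¹ * ∑ j : Fin N,
          (enl (Θ (w (y i))) u.1).indicator (fun _ => (1 : ℝ)) (y j - y i)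
        - ∫ z, (enl (Θ (w (y i))) u.1).indicator (fun _ => (1 : ℝ)) (z - y i) ∂ρ| with hFdef
  set S1 : ℝ := ⨆ i : Fin N, ⨆ u : {u : ℝ // 0 ≤ u}, F i u with hS1def
  set S2 : ℝ := ⨆ i : Fin N,
      ‖((N : ℝ)⁻¹ • ∑ j : Fin N,
          ((K (w (y i))).indicator (fun _ => (1 : ℝ)) (y j - y i)) • gradφ (y i - y j))
        - vel gradφ K w ρ (y i)‖ with hS2def
  have hHeq : hNrv N gradφ K Θ w ρ y = M' * S1 + S2 := rfl
  rw [hHeq]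
  have hS1nn : 0 ≤ S1 := Real.iSup_nonneg fun i => Real.iSup_nonneg fun u => abs_nonneg _
  have hS2nn : 0 ≤ S2 := Real.iSup_nonneg fun i => norm_nonneg _
  have hHnn : 0 ≤ M' * S1 + S2 := add_nonneg (mul_nonneg hM'0 hS1nn) hS2nn
  have hS2le : ∀ i : Fin N,
      ‖((N : ℝ)⁻¹ • ∑ j : Fin N,
          ((K (w (y i))).indicator (fun _ => (1 : ℝ)) (y j - y i)) • gradφ (y i - y j))
        - vel gradφ K w ρ (y i)‖ ≤ S2 := by
    intro i; rw [hS2def]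
    exact le_ciSup (f := fun i : Fin N =>
      ‖((N : ℝ)⁻¹ • ∑ j : Fin N,
          ((K (w (y i))).indicator (fun _ => (1 : ℝ)) (y j - y i)) • gradφ (y i - y j))
        - vel gradφ K w ρ (y i)‖)
      (Set.Finite.bddAbove (Set.finite_range _)) i
  have hCLw2 : (0:ℝ) < C₀ * ↑Lw + 2 := by nlinarith [mul_nonneg hC₀.le hLw0]
  have htnn : 0 ≤ (eLpNorm f ⊤ volume).toReal := ENNReal.toReal_nonneg
  have htR : (eLpNorm f ⊤ volume).toReal ≤ R := by rw [hRdef, hfint]; linarith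
  have htC : (eLpNorm f ⊤ volume).toReal * C₀ ≤ R * (C₀ + 1) := by nlinarith
  have hRC1 : (1:ℝ) ≤ (C₀ + 1) * R := by nlinarith
  clear_value M' R ε F S1 S2 Cc Q
  rcases eq_or_lt_of_le hε0 with hεz | hεpos
  · -- ε = 0 : x = y
    have hxy : x = y := by
      funext i
      have h1 : ‖x i - y i‖ ≤ 0 := (hεb i).trans hεz.ge
      exact sub_eq_zero.mp (norm_le_zero_iff.mp h1)
    subst hxy
    refine le_trans (ciSup_le fun i => hS2le i) ?_
    rw [← hεz, mul_zero, zero_add]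
    have h5 : 1 * (M' * S1 + S2) ≤ Cc * (M' * S1 + S2) :=
      mul_le_mul_of_nonneg_right hCc1 hHnn
    have h6 : 0 ≤ M' * S1 := mul_nonneg hM'0 hS1nn
    linarith
  · -- main case
    set u₀ : ℝ := (C₀ * Lw + 2) * ε with hu₀def
    have hu₀pos : 0 < u₀ := by rw [hu₀def]; exact mul_pos hCLw2 hεpos
    clear_value u₀
    -- integral identity and bounds
    have hmeasA : ∀ (i : Fin N) (u : ℝ), MeasurableSet (enl (Θ (w (y i))) u) :=
      fun i u => (enl_isClosed (hyp.closed_Θ _) u).measurableSet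
    have hIcalc : ∀ (i : Fin N) (u : ℝ),
        (∫ z, (enl (Θ (w (y i))) u).indicator (fun _ => (1:ℝ)) (z - y i) ∂ρ)
          = (ρ ((fun z => z - y i) ⁻¹' (enl (Θ (w (y i))) u))).toReal :=
      fun i u => integral_indicator_shift ρ (hmeasA i u) (y i)
    have hI0 : ∀ (i : Fin N) (u : ℝ),
        0 ≤ ∫ z, (enl (Θ (w (y i))) u).indicator (fun _ => (1:ℝ)) (z - y i) ∂ρ := by
      intro i u; rw [hIcalc i u]; exact ENNReal.toReal_nonneg
    have hI1 : ∀ (i : Fin N) (u : ℝ),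
        (∫ z, (enl (Θ (w (y i))) u).indicator (fun _ => (1:ℝ)) (z - y i) ∂ρ) ≤ 1 := by
      intro i u; rw [hIcalc i u]
      exact ENNReal.toReal_le_of_le_ofReal zero_le_one (by simpa using prob_le_one)
    have hemp0 : ∀ (i : Fin N) (u : ℝ),
        0 ≤ (N:ℝ)⁻¹ * ∑ j : Fin N,
          (enl (Θ (w (y i))) u).indicator (fun _ => (1:ℝ)) (y j - y i) := by
      intro i u
      exact mul_nonneg (by positivity)
        (Finset.sum_nonneg fun j _ => Set.indicator_nonneg (fun _ _ => zero_le_one) _)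
    have hemp1 : ∀ (i : Fin N) (u : ℝ),
        (N:ℝ)⁻¹ * (∑ j : Fin N,
          (enl (Θ (w (y i))) u).indicator (fun _ => (1:ℝ)) (y j - y i)) ≤ 1 := by
      intro i u
      have hb : (∑ j : Fin N,
          (enl (Θ (w (y i))) u).indicator (fun _ => (1:ℝ)) (y j - y i)) ≤ (N:ℝ) := by
        calc (∑ j : Fin N, (enl (Θ (w (y i))) u).indicator (fun _ => (1:ℝ)) (y j - y i))
            ≤ ∑ _j : Fin N, (1:ℝ) := by
              refine Finset.sum_le_sum fun j _ => ?_
              by_cases h : (y j - y i) ∈ enl (Θ (w (y i))) u <;> simp [h]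
          _ = (N:ℝ) := by simp
      calc (N:ℝ)⁻¹ * (∑ j : Fin N,
            (enl (Θ (w (y i))) u).indicator (fun _ => (1:ℝ)) (y j - y i))
          ≤ (N:ℝ)⁻¹ * (N:ℝ) := by
            apply mul_le_mul_of_nonneg_left hb (by positivity)
        _ = 1 := inv_mul_cancel₀ hNpos.ne'
    have hFle : ∀ (i : Fin N) (u : {u : ℝ // 0 ≤ u}), F i u ≤ 2 := by
      intro i u
      simp only [hFdef]
      have h1 := hemp0 i u.1
      have h2 := hemp1 i u.1
      have h3 := hI0 i u.1
      have h4 := hI1 i u.1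
      rw [abs_le]
      constructor <;> linarith
    have hFS1 : ∀ (i : Fin N) (u : {u : ℝ // 0 ≤ u}), F i u ≤ S1 := by
      intro i u
      rw [hS1def]
      refine le_trans (le_ciSup ⟨2, ?_⟩ u) (le_ciSup (f := fun i => ⨆ u, F i u) ⟨2, ?_⟩ i)
      · rintro r ⟨u', rfl⟩; exact hFle i u'
      · rintro r ⟨i', rfl⟩; exact ciSup_le fun u' => hFle i' u'
    -- bound on the ρ-mass of the enlarged boundary
    have hIle : ∀ i : Fin N,
        (∫ z, (enl (Θ (w (y i))) u₀).indicator (fun _ => (1:ℝ)) (z - y i) ∂ρ)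
          ≤ Q * (R * ε) := by
      intro i
      rcases lt_or_ge u₀ 1 with hu1 | hu1
      · rw [hIcalc i u₀]
        have h1 : ρ ((fun z => z - y i) ⁻¹' enl (Θ (w (y i))) u₀)
            ≤ eLpNorm f ⊤ volume * volume (enl (Θ (w (y i))) u₀) := by
          rw [hρd]; exact meas_shift_le hf0 (hmeasA i u₀) (y i)
        have h2 := hyp.h2ii (w (y i)) u₀ hu₀pos hu1
        have h3 : ρ ((fun z => z - y i) ⁻¹' enl (Θ (w (y i))) u₀)
            ≤ eLpNorm f ⊤ volume * ENNReal.ofReal (C₀ * u₀) :=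
          h1.trans (mul_le_mul_right h2 _)
        have h4 := ENNReal.toReal_mono
          (ENNReal.mul_ne_top hfinf.ne ENNReal.ofReal_ne_top) h3
        rw [ENNReal.toReal_mul, ENNReal.toReal_ofReal (by positivity)] at h4
        refine h4.trans ?_
        have hq : (0:ℝ) ≤ (C₀ * Lw + 2) * ε := mul_nonneg hCLw2.le hε0
        calc (eLpNorm f ⊤ volume).toReal * (C₀ * u₀)
            = ((eLpNorm f ⊤ volume).toReal * C₀) * ((C₀ * Lw + 2) * ε) := by
              rw [hu₀def]; ring
          _ ≤ (R * (C₀ + 1)) * ((C₀ * Lw + 2) * ε) :=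
              mul_le_mul_of_nonneg_right htC hq
          _ = Q * (R * ε) := by rw [hQdef]; ring
      · refine (hI1 i u₀).trans ?_
        have hq : (0:ℝ) ≤ (C₀ * Lw + 2) * ε := mul_nonneg hCLw2.le hε0
        calc (1:ℝ) ≤ u₀ := hu1
          _ = 1 * ((C₀ * Lw + 2) * ε) := by rw [hu₀def]; ring
          _ ≤ ((C₀ + 1) * R) * ((C₀ * Lw + 2) * ε) :=
              mul_le_mul_of_nonneg_right hRC1 hq
          _ = Q * (R * ε) := by rw [hQdef]; ring
    -- per-index estimate
    refine ciSup_le fun i => ?_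
    set Tx : Euc d := (N : ℝ)⁻¹ • ∑ j : Fin N,
        ((K (w (x i))).indicator (fun _ => (1 : ℝ)) (x j - x i)) • gradφ (x i - x j) with hTx
    set Ty : Euc d := (N : ℝ)⁻¹ • ∑ j : Fin N,
        ((K (w (y i))).indicator (fun _ => (1 : ℝ)) (y j - y i)) • gradφ (y i - y j) with hTy
    have htri : ‖Tx - vel gradφ K w ρ (y i)‖
        ≤ ‖Tx - Ty‖ + ‖Ty - vel gradφ K w ρ (y i)‖ := by
      have h := norm_add_le (Tx - Ty) (Ty - vel gradφ K w ρ (y i))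
      rwa [sub_add_sub_cancel] at h
    -- bound ‖Tx - Ty‖
    have hjbd : ∀ j : Fin N,
        ‖((K (w (x i))).indicator (fun _ => (1:ℝ)) (x j - x i)) • gradφ (x i - x j)
          - ((K (w (y i))).indicator (fun _ => (1:ℝ)) (y j - y i)) • gradφ (y i - y j)‖
        ≤ M' * (enl (Θ (w (y i))) u₀).indicator (fun _ => (1:ℝ)) (y j - y i)
          + 2 * (Lφ:ℝ) * ε := by
      intro j
      set a : ℝ := (K (w (x i))).indicator (fun _ => (1:ℝ)) (x j - x i) with ha
      set b : ℝ := (K (w (y i))).indicator (fun _ => (1:ℝ)) (y j - y i) with hb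
      have hsplit : a • gradφ (x i - x j) - b • gradφ (y i - y j)
          = (a - b) • gradφ (x i - x j) + b • (gradφ (x i - x j) - gradφ (y i - y j)) := by
        rw [sub_smul, smul_sub]; abel
      have hab : |a - b| ≤ (enl (Θ (w (y i))) u₀).indicator (fun _ => (1:ℝ)) (y j - y i) := by
        rw [ha, hb, hu₀def]
        exact indicator_diff_bound hyp hC₀.le hw (hεb i) (hεb j)
      have hbabs : |b| ≤ 1 := by
        rw [hb, abs_of_nonneg (Set.indicator_nonneg (fun _ _ => zero_le_one) _)]
        by_cases h2 : (y j - y i) ∈ K (w (y i))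
        · rw [Set.indicator_of_mem h2]
        · rw [Set.indicator_of_notMem h2]; exact zero_le_one
      have hgd : ‖gradφ (x i - x j) - gradφ (y i - y j)‖ ≤ (Lφ:ℝ) * (2 * ε) := by
        have hd := hLφ.dist_le_mul (x i - x j) (y i - y j)
        rw [dist_eq_norm, dist_eq_norm] at hd
        refine hd.trans ?_
        apply mul_le_mul_of_nonneg_left _ hLφ0
        have h1 : (x i - x j) - (y i - y j) = (x i - y i) - (x j - y j) := by abel
        rw [h1]
        calc ‖(x i - y i) - (x j - y j)‖ ≤ ‖x i - y i‖ + ‖x j - y j‖ := norm_sub_le _ _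
          _ ≤ 2 * ε := by linarith [hεb i, hεb j]
      rw [hsplit]
      calc ‖(a - b) • gradφ (x i - x j) + b • (gradφ (x i - x j) - gradφ (y i - y j))‖
          ≤ ‖(a - b) • gradφ (x i - x j)‖ + ‖b • (gradφ (x i - x j) - gradφ (y i - y j))‖ :=
            norm_add_le _ _
        _ = |a - b| * ‖gradφ (x i - x j)‖
            + |b| * ‖gradφ (x i - x j) - gradφ (y i - y j)‖ := by
            rw [norm_smul, norm_smul, Real.norm_eq_abs, Real.norm_eq_abs]
        _ ≤ ((enl (Θ (w (y i))) u₀).indicator (fun _ => (1:ℝ)) (y j - y i)) * M'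
            + 1 * ((Lφ:ℝ) * (2 * ε)) := by
            refine add_le_add (mul_le_mul hab (hM'le _) (norm_nonneg _) ?_)
              (mul_le_mul hbabs hgd (norm_nonneg _) zero_le_one)
            exact Set.indicator_nonneg (fun _ _ => zero_le_one) _
        _ = M' * (enl (Θ (w (y i))) u₀).indicator (fun _ => (1:ℝ)) (y j - y i)
            + 2 * (Lφ:ℝ) * ε := by ring
    have hTxTy : ‖Tx - Ty‖
        ≤ M' * ((N:ℝ)⁻¹ * ∑ j : Fin N,
            (enl (Θ (w (y i))) u₀).indicator (fun _ => (1:ℝ)) (y j - y i))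
          + 2 * (Lφ:ℝ) * ε := by
      have e1 : Tx - Ty = (N:ℝ)⁻¹ • (∑ j : Fin N,
          (((K (w (x i))).indicator (fun _ => (1:ℝ)) (x j - x i)) • gradφ (x i - x j)
            - ((K (w (y i))).indicator (fun _ => (1:ℝ)) (y j - y i)) • gradφ (y i - y j))) := by
        rw [hTx, hTy, ← smul_sub, ← Finset.sum_sub_distrib]
      rw [e1, norm_smul, Real.norm_eq_abs, abs_of_nonneg (by positivity : (0:ℝ) ≤ (N:ℝ)⁻¹)]
      calc (N:ℝ)⁻¹ * ‖∑ j : Fin N, _‖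
          ≤ (N:ℝ)⁻¹ * ∑ j : Fin N,
              ‖((K (w (x i))).indicator (fun _ => (1:ℝ)) (x j - x i)) • gradφ (x i - x j)
                - ((K (w (y i))).indicator (fun _ => (1:ℝ)) (y j - y i)) • gradφ (y i - y j)‖ := by
            apply mul_le_mul_of_nonneg_left (norm_sum_le _ _) (by positivity)
        _ ≤ (N:ℝ)⁻¹ * ∑ j : Fin N,
              (M' * (enl (Θ (w (y i))) u₀).indicator (fun _ => (1:ℝ)) (y j - y i)
                + 2 * (Lφ:ℝ) * ε) := by
            apply mul_le_mul_of_nonneg_left (Finset.sum_le_sum fun j _ => hjbd j) (by positivity)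
        _ = M' * ((N:ℝ)⁻¹ * ∑ j : Fin N,
              (enl (Θ (w (y i))) u₀).indicator (fun _ => (1:ℝ)) (y j - y i))
            + 2 * (Lφ:ℝ) * ε := by
            rw [Finset.sum_add_distrib, Finset.sum_const, Finset.card_univ, Fintype.card_fin,
              nsmul_eq_mul, ← Finset.mul_sum, mul_add]
            rw [show (N:ℝ)⁻¹ * ((N:ℝ) * (2 * (Lφ:ℝ) * ε)) = ((N:ℝ)⁻¹ * (N:ℝ)) * (2 * (Lφ:ℝ) * ε) from by ring,
              inv_mul_cancel₀ hNpos.ne', one_mul]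
            ring
    -- empirical mass ≤ fluctuation + ρ-mass
    have hmass : (N:ℝ)⁻¹ * (∑ j : Fin N,
          (enl (Θ (w (y i))) u₀).indicator (fun _ => (1:ℝ)) (y j - y i))
        ≤ F i ⟨u₀, hu₀pos.le⟩
          + ∫ z, (enl (Θ (w (y i))) u₀).indicator (fun _ => (1:ℝ)) (z - y i) ∂ρ := by
      have := le_abs_self ((N:ℝ)⁻¹ * (∑ j : Fin N,
          (enl (Θ (w (y i))) u₀).indicator (fun _ => (1:ℝ)) (y j - y i))
        - ∫ z, (enl (Θ (w (y i))) u₀).indicator (fun _ => (1:ℝ)) (z - y i) ∂ρ)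
      rw [hFdef]
      simp only
      linarith
    have hfinal : ‖Tx - vel gradφ K w ρ (y i)‖
        ≤ M' * S1 + M' * (Q * (R * ε)) + 2 * (Lφ:ℝ) * ε + S2 := by
      have h1 : (N:ℝ)⁻¹ * (∑ j : Fin N,
            (enl (Θ (w (y i))) u₀).indicator (fun _ => (1:ℝ)) (y j - y i))
          ≤ S1 + Q * (R * ε) :=
        hmass.trans (add_le_add (hFS1 i ⟨u₀, hu₀pos.le⟩) (hIle i))
      have h2 : ‖Tx - Ty‖ ≤ M' * (S1 + Q * (R * ε)) + 2 * (Lφ:ℝ) * ε :=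
        hTxTy.trans (by linarith [mul_le_mul_of_nonneg_left h1 hM'0])
      have h3 := hS2le i
      rw [← hTy] at h3
      calc ‖Tx - vel gradφ K w ρ (y i)‖ ≤ ‖Tx - Ty‖ + ‖Ty - vel gradφ K w ρ (y i)‖ := htri
        _ ≤ (M' * (S1 + Q * (R * ε)) + 2 * (Lφ:ℝ) * ε) + S2 := add_le_add h2 h3
        _ = M' * S1 + M' * (Q * (R * ε)) + 2 * (Lφ:ℝ) * ε + S2 := by ring
    refine hfinal.trans ?_
    rw [hCcdef]
    nlinarith [mul_nonneg (mul_nonneg (sub_nonneg.2 hM'Mφ) hQ0.le) (mul_nonneg hR0 hε0),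
      mul_nonneg (mul_nonneg hLφ0 (sub_nonneg.2 hR1)) hε0,
      mul_nonneg hR0 hε0, mul_nonneg hMφ0 hQ0.le,
      mul_nonneg (add_nonneg (mul_nonneg hMφ0 hQ0.le) (mul_nonneg (by norm_num : (0:ℝ) ≤ 2) hLφ0)) hHnn]

/-- Coupling estimate: under (H1)-(H2), Lipschitz `w` and bounded Lipschitz `∇φ`, there is
a constant `C > 0` independent of `N` such that almost surely
`sup_i |V[μ^N](X_i) − V[ρ](Y_i)| ≤ C (‖ρ‖_{L¹∩L∞} sup_i |X_i − Y_i| + H_N)`,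
where `μ^N` is the empirical measure of the `X_i` and `Y₁, …, Y_N` are i.i.d. with law
`ρ`, which has an `L¹ ∩ L∞` density. -/
theorem coupling_velocity_estimate
    {d : ℕ} (O : Set (Euc d)) (hObd : Bornology.IsBounded O) (hOmeas : MeasurableSet O)
    {Ω : Type*} [MeasurableSpace Ω] (P : Measure Ω) [IsProbabilityMeasure P]
    (K Θ : Euc d → Set (Euc d)) (C₀ : ℝ) (hC₀ : 0 < C₀) (𝒦 : Set (Euc d))
    (hyp : HypK K Θ C₀ 𝒦)
    (w : Euc d → Euc d) (Lw : NNReal) (hw : LipschitzWith Lw w)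
    (gradφ : Euc d → Euc d) (Mφ : ℝ) (hMφ : ∀ x, ‖gradφ x‖ ≤ Mφ)
    (Lφ : NNReal) (hLφ : LipschitzWith Lφ gradφ)
    (ρ : Measure (Euc d)) [IsProbabilityMeasure ρ]
    (f : Euc d → ℝ) (hf0 : ∀ x, 0 ≤ f x)
    (hρd : ρ = volume.withDensity fun x => ENNReal.ofReal (f x))
    (hρO : ρ Oᶜ = 0) (hf1 : Integrable f) (hfinf : eLpNorm f ⊤ volume < ⊤) :
    ∃ C > 0, ∀ (N : ℕ), 0 < N → ∀ (X Y : Fin N → Ω → Euc d),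
      (∀ i, Measurable (X i)) → (∀ i, Measurable (Y i)) →
      (∀ i ω, X i ω ∈ O) → (∀ i ω, Y i ω ∈ O) →
      (∀ i, Measure.map (Y i) P = ρ) →
      iIndepFun Y P →
      ∀ᵐ ω ∂P,
        (⨆ i : Fin N,
          ‖((N : ℝ)⁻¹ • ∑ j : Fin N,
              ((K (w (X i ω))).indicator (fun _ => (1 : ℝ)) (X j ω - X i ω)) •
                gradφ (X i ω - X j ω))
            - vel gradφ K w ρ (Y i ω)‖)
        ≤ C * (((∫ x, f x) + (eLpNorm f ⊤ volume).toReal) * (⨆ i : Fin N, ‖X i ω - Y i ω‖)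
            + hNrv N gradφ K Θ w ρ (fun i => Y i ω)) := by
  have hMφ0 : 0 ≤ Mφ := le_trans (norm_nonneg _) (hMφ 0)
  refine ⟨Mφ * ((C₀ + 1) * (C₀ * Lw + 2)) + 2 * Lφ + 1, ?_, ?_⟩
  · have h1 : (0:ℝ) ≤ Mφ * ((C₀ + 1) * (C₀ * ↑Lw + 2)) :=
      mul_nonneg hMφ0 (by nlinarith [mul_nonneg hC₀.le Lw.coe_nonneg])
    have h2 : (0:ℝ) ≤ (Lφ:ℝ) := Lφ.coe_nonneg
    linarith
  · intro N hN X Y hXm hYm hXO hYO hlaw hind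
    exact Filter.Eventually.of_forall fun ω =>
      main_det K Θ hC₀ hyp w Lw hw gradφ Mφ hMφ Lφ hLφ ρ f hf0 hρd hf1 hfinf N hN
        (fun i => X i ω) (fun i => Y i ω)
end
end

section
/- Let f : [0, ∞) → [0, ∞) be continuous, let C > 0 and f₀ ≥ 0, and suppose that f(t) ≤ f₀ exp(C ∫₀ᵗ f(s) ds) for all t ≥ 0. Then for every t ≥ 0 with C f₀ t < 1 one has f(t) ≤ f₀ / (1 − C f₀ t). -/
open Set intervalIntegral

/-- Gronwall-type inequality (i): if a continuous nonnegative `f` on `[0, ∞)` satisfies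
`f(t) ≤ f₀ exp(C ∫₀ᵗ f(s) ds)` for all `t ≥ 0`, then `f(t) ≤ f₀ / (1 − C f₀ t)`
whenever `C f₀ t < 1`. -/
theorem gronwall_exp_integral (f : ℝ → ℝ) (hf : ContinuousOn f (Set.Ici 0))
    (hfpos : ∀ t, 0 ≤ t → 0 ≤ f t) (C f₀ : ℝ) (hC : 0 < C) (hf₀ : 0 ≤ f₀)
    (h : ∀ t, 0 ≤ t → f t ≤ f₀ * Real.exp (C * ∫ s in (0:ℝ)..t, f s)) :
    ∀ t, 0 ≤ t → C * f₀ * t < 1 → f t ≤ f₀ / (1 - C * f₀ * t) := by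
  intro t ht hlt
  set F : ℝ → ℝ := fun x => ∫ s in (0:ℝ)..x, f s with hFdef
  have hint : ∀ x, 0 ≤ x → IntervalIntegrable f MeasureTheory.volume 0 x := by
    intro x hx
    apply ContinuousOn.intervalIntegrable
    apply hf.mono
    rw [Set.uIcc_of_le hx]
    exact Set.Icc_subset_Ici_self
  -- continuity of F on [0, t]
  have hFcont : ContinuousOn F (Set.Icc 0 t) := by
    have hI : MeasureTheory.IntegrableOn f (Set.uIcc 0 t) MeasureTheory.volume := by
      rw [Set.uIcc_of_le ht]
      exact (hf.mono Set.Icc_subset_Ici_self).integrableOn_Icc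
    have := intervalIntegral.continuousOn_primitive_interval hI
    rwa [Set.uIcc_of_le ht] at this
  set G : ℝ → ℝ := fun x => Real.exp (-C * F x) + C * f₀ * x with hGdef
  -- G is monotone on [0, t]
  have hderiv : ∀ x ∈ Set.Ioo 0 t, HasDerivAt G (-C * f x * Real.exp (-C * F x) + C * f₀) x := by
    intro x hx
    have hx0 : (0:ℝ) < x := hx.1
    have hcont : ContinuousAt f x :=
      (hf.mono (Set.Ioi_subset_Ici le_rfl)).continuousAt (Ioi_mem_nhds hx0)
    have hF' : HasDerivAt F (f x) x :=
      intervalIntegral.integral_hasDerivAt_right (hint x hx0.le)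
        ((hf.mono (Set.Ioi_subset_Ici le_rfl)).stronglyMeasurableAtFilter isOpen_Ioi x hx0) hcont
    have h1 : HasDerivAt (fun y => -C * F y) (-C * f x) x := hF'.const_mul (-C)
    have h2 : HasDerivAt (fun y => Real.exp (-C * F y)) (-C * f x * Real.exp (-C * F x)) x := by
      simpa [mul_comm] using h1.exp
    simpa [hGdef, neg_mul, Pi.add_def] using h2.add ((hasDerivAt_id x).const_mul (C * f₀))
  have hmono : MonotoneOn G (Set.Icc 0 t) := by
    apply monotoneOn_of_deriv_nonneg (convex_Icc 0 t)
    · exact ((Real.continuous_exp.comp_continuousOn (hFcont.const_smul (-C))).add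
        (continuous_const.mul continuous_id).continuousOn)
    · intro x hx
      rw [interior_Icc] at hx
      exact ((hderiv x hx).differentiableAt).differentiableWithinAt
    · intro x hx
      rw [interior_Icc] at hx
      rw [(hderiv x hx).deriv]
      have hx0 : (0:ℝ) ≤ x := hx.1.le
      have hfx : f x * Real.exp (-C * F x) ≤ f₀ := by
        have := h x hx0
        have hpos : (0:ℝ) < Real.exp (-C * F x) := Real.exp_pos _
        calc f x * Real.exp (-C * F x)
            ≤ f₀ * Real.exp (C * F x) * Real.exp (-C * F x) :=
              mul_le_mul_of_nonneg_right this hpos.le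
          _ = f₀ := by rw [mul_assoc, ← Real.exp_add]; ring_nf; simp
      nlinarith [Real.exp_pos (-C * F x), hfpos x hx0]
  have hG0 : G 0 = 1 := by simp [hGdef, hFdef]
  have hkey : 1 - C * f₀ * t ≤ Real.exp (-C * F t) := by
    have := hmono (Set.left_mem_Icc.2 ht) (Set.right_mem_Icc.2 ht) ht
    rw [hG0] at this
    simp only [hGdef] at this
    linarith
  have hpos : (0:ℝ) < 1 - C * f₀ * t := by linarith
  have hft : f t ≤ f₀ * Real.exp (C * F t) := h t ht
  have hexple : Real.exp (C * F t) ≤ 1 / (1 - C * f₀ * t) := by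
    rw [le_div_iff₀ hpos]
    calc Real.exp (C * F t) * (1 - C * f₀ * t)
        ≤ Real.exp (C * F t) * Real.exp (-C * F t) :=
          mul_le_mul_of_nonneg_left hkey (Real.exp_pos _).le
      _ = 1 := by rw [← Real.exp_add]; simp
  calc f t ≤ f₀ * Real.exp (C * F t) := hft
    _ ≤ f₀ * (1 / (1 - C * f₀ * t)) := mul_le_mul_of_nonneg_left hexple hf₀
    _ = f₀ / (1 - C * f₀ * t) := by ring
end

section
/- Let f, g : [0, ∞) → [0, ∞) be continuous, let p ≥ 1, C > 0 and f₀ ≥ 0, and suppose that f(t)^p ≤ f₀^p + C p ∫₀ᵗ ( g(s) f(s)^{p−1} + f(s)^p ) ds for all t ≥ 0. Then for all t ≥ 0 one has f(t) ≤ f₀ e^{Ct} + C ∫₀ᵗ g(s) e^{C(t−s)} ds. -/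
open Real MeasureTheory Set Filter intervalIntegral

/-- Auxiliary Gronwall lemma for globally continuous nonnegative functions with a strictly
positive constant term. -/
lemma gronwall_aux (F G : ℝ → ℝ) (hF : Continuous F) (hG : Continuous G)
    (hFnn : ∀ t, 0 ≤ F t) (hGnn : ∀ t, 0 ≤ G t)
    (p C A : ℝ) (hp : 1 ≤ p) (hC : 0 < C) (hA : 0 < A)
    (h : ∀ t, 0 ≤ t →
      F t ^ p ≤ A + C * p * ∫ s in (0:ℝ)..t, (G s * F s ^ (p - 1) + F s ^ p)) :
    ∀ T, 0 ≤ T →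
      F T ≤ A ^ (1/p) * Real.exp (C * T)
        + C * ∫ s in (0:ℝ)..T, G s * Real.exp (C * (T - s)) := by
  intro T hT
  have hp0 : (0:ℝ) < p := lt_of_lt_of_le one_pos hp
  set h₀ : ℝ → ℝ := fun s => G s * F s ^ (p - 1) + F s ^ p with hh₀
  have hFp1 : Continuous fun s => F s ^ (p - 1) :=
    hF.rpow_const (fun x => Or.inr (by linarith))
  have hFp : Continuous fun s => F s ^ p :=
    hF.rpow_const (fun x => Or.inr (by linarith))
  have hh₀c : Continuous h₀ := (hG.mul hFp1).add hFp
  have hh₀nn : ∀ s, 0 ≤ h₀ s := fun s =>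
    add_nonneg (mul_nonneg (hGnn s) (Real.rpow_nonneg (hFnn s) _))
      (Real.rpow_nonneg (hFnn s) _)
  set Φ : ℝ → ℝ := fun t => A + C * p * ∫ s in (0:ℝ)..t, h₀ s with hΦ
  have hΦd : ∀ t, HasDerivAt Φ (C * p * h₀ t) t := fun t =>
    (((hh₀c.integral_hasStrictDerivAt 0 t).hasDerivAt).const_mul (C * p)).const_add A
  have hΦc : Continuous Φ :=
    continuous_iff_continuousAt.2 fun t => (hΦd t).continuousAt
  have hΦA : ∀ t, 0 ≤ t → A ≤ Φ t := by
    intro t ht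
    have h1 : 0 ≤ ∫ s in (0:ℝ)..t, h₀ s :=
      intervalIntegral.integral_nonneg ht (fun s _ => hh₀nn s)
    have h2 : 0 < C * p := mul_pos hC hp0
    have h3 : Φ t = A + C * p * ∫ s in (0:ℝ)..t, h₀ s := rfl
    nlinarith
  have hΦpos : ∀ t, 0 ≤ t → 0 < Φ t := fun t ht => lt_of_lt_of_le hA (hΦA t ht)
  set u : ℝ → ℝ := fun t => Φ t ^ (1/p) with hu
  have huc : Continuous u := hΦc.rpow_const (fun x => Or.inr (by positivity))
  have hFu : ∀ t, 0 ≤ t → F t ≤ u t := by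
    intro t ht
    have h1 : F t ^ p ≤ Φ t := h t ht
    have h2 : (F t ^ p) ^ (1/p) = F t := by
      rw [← Real.rpow_mul (hFnn t), mul_one_div, div_self (ne_of_gt hp0), Real.rpow_one]
    calc F t = (F t ^ p) ^ (1/p) := h2.symm
      _ ≤ Φ t ^ (1/p) :=
        Real.rpow_le_rpow (Real.rpow_nonneg (hFnn t) p) h1 (by positivity)
  set u' : ℝ → ℝ := fun t => 1/p * Φ t ^ (1/p - 1) * (C * p * h₀ t) with hu'
  have hud : ∀ t, 0 ≤ t → HasDerivAt u (u' t) t := by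
    intro t ht
    exact (Real.hasDerivAt_rpow_const (p := 1/p)
      (Or.inl (ne_of_gt (hΦpos t ht)))).comp t (hΦd t)
  have hubound : ∀ t, 0 ≤ t → u' t ≤ C * G t + C * u t := by
    intro t ht
    have hΦp := hΦpos t ht
    have h1 : F t ^ (p - 1) ≤ Φ t ^ ((p - 1)/p) := by
      calc F t ^ (p - 1) ≤ (Φ t ^ (1/p)) ^ (p - 1) :=
            Real.rpow_le_rpow (hFnn t) (hFu t ht) (by linarith)
        _ = Φ t ^ ((p - 1)/p) := by
            rw [← Real.rpow_mul hΦp.le]; congr 1; ring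
    have h2 : F t ^ p ≤ Φ t := h t ht
    have key : h₀ t ≤ G t * Φ t ^ ((p - 1)/p) + Φ t :=
      add_le_add (mul_le_mul_of_nonneg_left h1 (hGnn t)) h2
    have hnn : 0 ≤ Φ t ^ (1/p - 1) := Real.rpow_nonneg hΦp.le _
    have e1 : u' t = C * (Φ t ^ (1/p - 1) * h₀ t) := by
      simp only [hu']; field_simp
    have e2 : Φ t ^ (1/p - 1) * Φ t ^ ((p - 1)/p) = 1 := by
      rw [← Real.rpow_add hΦp, show 1/p - 1 + (p - 1)/p = 0 by field_simp; ring,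
        Real.rpow_zero]
    have e3 : Φ t ^ (1/p - 1) * Φ t = Φ t ^ (1/p) := by
      nth_rewrite 2 [← Real.rpow_one (Φ t)]
      rw [← Real.rpow_add hΦp]; congr 1; ring
    have e4 : Φ t ^ (1/p - 1) * (G t * Φ t ^ ((p - 1)/p) + Φ t) = G t + u t := by
      rw [mul_add, show Φ t ^ (1/p - 1) * (G t * Φ t ^ ((p - 1)/p))
        = G t * (Φ t ^ (1/p - 1) * Φ t ^ ((p - 1)/p)) by ring, e2, mul_one, e3]
    calc u' t = C * (Φ t ^ (1/p - 1) * h₀ t) := e1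
      _ ≤ C * (Φ t ^ (1/p - 1) * (G t * Φ t ^ ((p - 1)/p) + Φ t)) := by
          apply mul_le_mul_of_nonneg_left _ hC.le
          exact mul_le_mul_of_nonneg_left key hnn
      _ = C * G t + C * u t := by rw [e4, mul_add]
  -- the comparison function v
  have hGe : Continuous fun s => G s * Real.exp (-(C * s)) :=
    hG.mul ((continuous_const.mul continuous_id).neg.rexp)
  set Ψ : ℝ → ℝ := fun t => A ^ (1/p) + C * ∫ s in (0:ℝ)..t, G s * Real.exp (-(C * s))
    with hΨ
  have hΨd : ∀ t, HasDerivAt Ψ (C * (G t * Real.exp (-(C * t)))) t := fun t =>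
    (((hGe.integral_hasStrictDerivAt 0 t).hasDerivAt).const_mul C).const_add _
  have hΨc : Continuous Ψ := continuous_iff_continuousAt.2 fun t => (hΨd t).continuousAt
  set v : ℝ → ℝ := fun t => Real.exp (C * t) * Ψ t with hv
  have hvc : Continuous v := ((continuous_const.mul continuous_id).rexp).mul hΨc
  have hexp : ∀ t : ℝ, HasDerivAt (fun t => Real.exp (C * t)) (C * Real.exp (C * t)) t := by
    intro t
    have := (Real.hasDerivAt_exp (C * t)).comp t ((hasDerivAt_id t).const_mul C)
    exact this.congr_deriv (by ring)
  have hvd : ∀ t, HasDerivAt v (C * v t + C * G t) t := by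
    intro t
    have h1 := (hexp t).mul (hΨd t)
    have h2 : Real.exp (C * t) * Real.exp (-(C * t)) = 1 := by
      rw [← Real.exp_add]; simp
    refine h1.congr_deriv ?_
    simp only [hv]
    linear_combination (C * G t) * h2
  -- Gronwall comparison of u and v
  set w : ℝ → ℝ := fun t => u t - v t with hw
  set w' : ℝ → ℝ := fun t => u' t - (C * v t + C * G t) with hw'
  have hw0 : w 0 ≤ 0 := by
    simp only [hw, hu, hΦ, hv, hΨ, intervalIntegral.integral_same, mul_zero, add_zero,
      mul_zero, Real.exp_zero, one_mul]
    simp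
  have hwc : ContinuousOn w (Icc 0 T) := (huc.sub hvc).continuousOn
  have hwd : ∀ x ∈ Ico 0 T, HasDerivWithinAt w (w' x) (Ici x) x := fun x hx =>
    (((hud x hx.1).sub (hvd x)).hasDerivWithinAt)
  have hwb : ∀ x ∈ Ico 0 T, w' x ≤ C * w x + 0 := by
    intro x hx
    have := hubound x hx.1
    simp only [hw', hw]
    linarith [this]
  have main := le_gronwallBound_of_liminf_deriv_right_le (f := w) (f' := w')
    (δ := 0) (K := C) (ε := 0) (a := 0) (b := T) hwc
    (fun x hx r hr => ((hwd x hx).liminf_right_slope_le hr).mono fun z hz => by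
      rwa [slope_def_field, div_eq_inv_mul] at hz)
    hw0 hwb T (right_mem_Icc.2 hT)
  rw [sub_zero, gronwallBound_ε0_δ0] at main
  have huv : u T ≤ v T := by simpa [hw, sub_nonpos] using main
  have hFv : F T ≤ v T := (hFu T hT).trans huv
  -- rewrite v T into the desired form
  have hvT : v T = A ^ (1/p) * Real.exp (C * T)
      + C * ∫ s in (0:ℝ)..T, G s * Real.exp (C * (T - s)) := by
    have hint : (∫ s in (0:ℝ)..T, G s * Real.exp (C * (T - s)))
        = Real.exp (C * T) * ∫ s in (0:ℝ)..T, G s * Real.exp (-(C * s)) := by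
      rw [← intervalIntegral.integral_const_mul]
      apply intervalIntegral.integral_congr
      intro s _
      show G s * Real.exp (C * (T - s)) = Real.exp (C * T) * (G s * Real.exp (-(C * s)))
      rw [show C * (T - s) = C * T + -(C * s) by ring, Real.exp_add]
      ring
    simp only [hv, hΨ]
    rw [hint]
    ring
  rw [hvT] at hFv
  exact hFv

/-- Gronwall-type inequality (ii): if continuous nonnegative `f, g` on `[0, ∞)` satisfy
`f(t)^p ≤ f₀^p + C p ∫₀ᵗ (g(s) f(s)^{p−1} + f(s)^p) ds` for all `t ≥ 0` with `p ≥ 1`,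
then `f(t) ≤ f₀ e^{Ct} + C ∫₀ᵗ g(s) e^{C(t−s)} ds` for all `t ≥ 0`. -/
theorem gronwall_power_integral (f g : ℝ → ℝ)
    (hf : ContinuousOn f (Set.Ici 0)) (hg : ContinuousOn g (Set.Ici 0))
    (hfpos : ∀ t, 0 ≤ t → 0 ≤ f t) (hgpos : ∀ t, 0 ≤ t → 0 ≤ g t)
    (p C f₀ : ℝ) (hp : 1 ≤ p) (hC : 0 < C) (hf₀ : 0 ≤ f₀)
    (h : ∀ t, 0 ≤ t →
      f t ^ p ≤ f₀ ^ p + C * p * ∫ s in (0:ℝ)..t, (g s * f s ^ (p - 1) + f s ^ p)) :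
    ∀ t, 0 ≤ t →
      f t ≤ f₀ * Real.exp (C * t) + C * ∫ s in (0:ℝ)..t, g s * Real.exp (C * (t - s)) := by
  intro t ht
  have hp0 : (0:ℝ) < p := lt_of_lt_of_le one_pos hp
  set F : ℝ → ℝ := fun s => f (max s 0) with hF
  set G : ℝ → ℝ := fun s => g (max s 0) with hG
  have hmax : ∀ x : ℝ, max x 0 ∈ Set.Ici (0:ℝ) := fun x => Set.mem_Ici.2 (le_max_right x 0)
  have hFc : Continuous F :=
    hf.comp_continuous (continuous_id.max continuous_const) hmax
  have hGc : Continuous G :=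
    hg.comp_continuous (continuous_id.max continuous_const) hmax
  have hFeq : ∀ s, 0 ≤ s → F s = f s := fun s hs => by simp [hF, max_eq_left hs]
  have hGeq : ∀ s, 0 ≤ s → G s = g s := fun s hs => by simp [hG, max_eq_left hs]
  have hFnn : ∀ s, 0 ≤ F s := fun s => hfpos _ (hmax s)
  have hGnn : ∀ s, 0 ≤ G s := fun s => hgpos _ (hmax s)
  have hIeq : (∫ s in (0:ℝ)..t, g s * Real.exp (C * (t - s)))
      = ∫ s in (0:ℝ)..t, G s * Real.exp (C * (t - s)) := by
    apply intervalIntegral.integral_congr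
    intro s hs
    rw [Set.uIcc_of_le ht] at hs
    show g s * Real.exp (C * (t - s)) = G s * Real.exp (C * (t - s))
    rw [hGeq s hs.1]
  have key : ∀ ε : ℝ, 0 < ε →
      f t ≤ (f₀ ^ p + ε) ^ (1/p) * Real.exp (C * t)
        + C * ∫ s in (0:ℝ)..t, g s * Real.exp (C * (t - s)) := by
    intro ε hε
    have hA : 0 < f₀ ^ p + ε :=
      add_pos_of_nonneg_of_pos (Real.rpow_nonneg hf₀ p) hε
    have hhyp : ∀ t', 0 ≤ t' →
        F t' ^ p ≤ (f₀ ^ p + ε)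
          + C * p * ∫ s in (0:ℝ)..t', (G s * F s ^ (p - 1) + F s ^ p) := by
      intro t' ht'
      have hint : (∫ s in (0:ℝ)..t', (G s * F s ^ (p - 1) + F s ^ p))
          = ∫ s in (0:ℝ)..t', (g s * f s ^ (p - 1) + f s ^ p) := by
        apply intervalIntegral.integral_congr
        intro s hs
        rw [Set.uIcc_of_le ht'] at hs
        show G s * F s ^ (p - 1) + F s ^ p = g s * f s ^ (p - 1) + f s ^ p
        rw [hFeq s hs.1, hGeq s hs.1]
      rw [hFeq t' ht', hint]
      linarith [h t' ht']
    have := gronwall_aux F G hFc hGc hFnn hGnn p C (f₀ ^ p + ε) hp hC hA hhyp t ht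
    rw [hFeq t ht, ← hIeq] at this
    exact this
  -- pass to the limit ε → 0⁺
  have hlim : Filter.Tendsto (fun ε : ℝ => (f₀ ^ p + ε) ^ (1/p) * Real.exp (C * t)
      + C * ∫ s in (0:ℝ)..t, g s * Real.exp (C * (t - s))) (nhdsWithin 0 (Set.Ioi 0))
      (nhds (f₀ * Real.exp (C * t)
        + C * ∫ s in (0:ℝ)..t, g s * Real.exp (C * (t - s)))) := by
    have h1 : Filter.Tendsto (fun ε : ℝ => (f₀ ^ p + ε) ^ (1/p)) (nhds 0) (nhds f₀) := by
      have hc : ContinuousAt (fun ε : ℝ => (f₀ ^ p + ε) ^ (1/p)) 0 := by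
        apply ContinuousAt.rpow_const
        · exact (continuous_const.add continuous_id).continuousAt
        · right; positivity
      have hval : f₀ = (f₀ ^ p + 0) ^ (1/p) := by
        rw [add_zero, ← Real.rpow_mul hf₀, mul_one_div, div_self (ne_of_gt hp0),
          Real.rpow_one]
      convert hc.tendsto using 2
    exact (((h1.mono_left nhdsWithin_le_nhds).mul_const _).add_const _)
  exact ge_of_tendsto hlim (by
    filter_upwards [self_mem_nhdsWithin] with ε hε using key ε hε)
end
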